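/- Let c ∈ ℂ with |c| = 1, let 0 < η < 1 and n be a positive integer such that |c^n + c| ≤ η + 1 - (1 + η^n)^n. Then the closed disk of radius η centered at 0 is forward invariant under the second iterate of P_{n,c}(z) = z^n + c, i.e., if |z| ≤ η then |P_{n,c}(P_{n,c}(z))| ≤ η. -/

import Mathlib

/-
Write `P(z) = z ^ n + c` and `a = P(z) = c + z ^ n`. Then
`P(P(z)) = (a ^ n - c ^ n) + (c ^ n + c)`, and the first summand is small because `a` is
a perturbation of `c` of size `‖z ^ n‖ ≤ η ^ n`: bounding the geometric-sum factorisation of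
`(c + w) ^ n - c ^ n` termwise gives `(‖c‖ + ‖w‖) ^ n - ‖c‖ ^ n ≤ (1 + η ^ n) ^ n - 1`. The hypothesis on `‖c ^ n + c‖` is exactly
what makes the two bounds add up to `η`.
-/

theorem norm_add_pow_sub_pow_le {R : Type*} [NormedCommRing R] [NormOneClass R]
    (c w : R) (n : ℕ) :
    ‖(c + w) ^ n - c ^ n‖ ≤ (‖c‖ + ‖w‖) ^ n - ‖c‖ ^ n := by
  have hsum : ∀ i ∈ Finset.range n,
      ‖(c + w) ^ i * c ^ (n - 1 - i)‖ ≤ (‖c‖ + ‖w‖) ^ i * ‖c‖ ^ (n - 1 - i) := by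
    intro i _
    refine (norm_mul_le _ _).trans (mul_le_mul ?_ (norm_pow_le _ _) (norm_nonneg _)
      (by positivity))
    exact (norm_pow_le _ _).trans (pow_le_pow_left₀ (norm_nonneg _) (norm_add_le _ _) i)
  calc ‖(c + w) ^ n - c ^ n‖
      = ‖(∑ i ∈ Finset.range n, (c + w) ^ i * c ^ (n - 1 - i)) * w‖ := by
        rw [← geom_sum₂_mul, add_sub_cancel_left]
    _ ≤ ‖∑ i ∈ Finset.range n, (c + w) ^ i * c ^ (n - 1 - i)‖ * ‖w‖ := norm_mul_le _ _
    _ ≤ (∑ i ∈ Finset.range n, (‖c‖ + ‖w‖) ^ i * ‖c‖ ^ (n - 1 - i)) * ‖w‖ := by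
        gcongr
        exact (norm_sum_le _ _).trans (Finset.sum_le_sum hsum)
    _ = (‖c‖ + ‖w‖) ^ n - ‖c‖ ^ n := by
        rw [← geom_sum₂_mul, add_sub_cancel_left]

theorem stmt_5_general (c : ℂ) (hc : ‖c‖ = 1) (η : ℝ)
    (n : ℕ)
    (hineq : ‖c ^ n + c‖ ≤ η + 1 - (1 + η ^ n) ^ n) :
    ∀ z : ℂ, ‖z‖ ≤ η → ‖(z ^ n + c) ^ n + c‖ ≤ η := by
  intro z hz
  have hzn : ‖z ^ n‖ ≤ η ^ n := by
    rw [norm_pow]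
    exact pow_le_pow_left₀ (norm_nonneg z) hz n
  have hperturb : ‖(c + z ^ n) ^ n - c ^ n‖ ≤ (1 + η ^ n) ^ n - 1 := by
    calc ‖(c + z ^ n) ^ n - c ^ n‖ ≤ (‖c‖ + ‖z ^ n‖) ^ n - ‖c‖ ^ n :=
          norm_add_pow_sub_pow_le c (z ^ n) n
      _ ≤ (1 + η ^ n) ^ n - 1 := by
          rw [hc, one_pow]
          gcongr
  calc ‖(z ^ n + c) ^ n + c‖ = ‖((c + z ^ n) ^ n - c ^ n) + (c ^ n + c)‖ := by ring_nf
    _ ≤ ‖(c + z ^ n) ^ n - c ^ n‖ + ‖c ^ n + c‖ := norm_add_le _ _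
    _ ≤ η := by linarith

theorem stmt_5 (c : ℂ) (hc : ‖c‖ = 1) (η : ℝ) (h0 : 0 < η) (h1 : η < 1)
    (n : ℕ) (hn : 0 < n)
    (hineq : ‖c ^ n + c‖ ≤ η + 1 - (1 + η ^ n) ^ n) :
    ∀ z : ℂ, ‖z‖ ≤ η → ‖(z ^ n + c) ^ n + c‖ ≤ η :=
  stmt_5_general c hc η n hineq
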